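/- Let ε ∈ [0,1), M > 1, and let 𝓟 and 𝓔 be nonempty sets of density matrices on ℂ^d. Then there exist a CPTP map F from 2×2 complex matrices to d×d complex matrices and a pair (ρ, τ) ∈ 𝓟 × 𝓔 satisfying F(π_M) = τ and T(F(|1⟩⟨1|), ρ) ≤ ε, if and only if there exist τ ∈ 𝓔 and ω ∈ B_ε(𝓟) such that Mτ − ω is positive semidefinite. -/

import Mathlib

open Matrix ComplexOrder

/-- Trace norm of a complex matrix: the trace of `sqrt(AᴴA)` (sum of singular values). -/
noncomputable def traceNorm {n : Type*} [Fintype n] [DecidableEq n]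
    (A : Matrix n n ℂ) : ℝ :=
  (((Matrix.posSemidef_conjTranspose_mul_self A).1.eigenvectorUnitary.1 *
      Matrix.diagonal (((↑) : ℝ → ℂ) ∘ (√·) ∘ (Matrix.posSemidef_conjTranspose_mul_self A).1.eigenvalues) *
      (star (Matrix.posSemidef_conjTranspose_mul_self A).1.eigenvectorUnitary : Matrix n n ℂ)).trace).re

/-- Trace distance `T(X,Y) = ‖X - Y‖₁ / 2`. -/
noncomputable def traceDist {n : Type*} [Fintype n] [DecidableEq n]
    (X Y : Matrix n n ℂ) : ℝ :=
  traceNorm (X - Y) / 2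

/-- A density matrix: positive semidefinite with unit trace. -/
def IsDensityMatrix {n : Type*} [Fintype n] (ρ : Matrix n n ℂ) : Prop :=
  ρ.PosSemidef ∧ ρ.trace = 1

/-- The battery Gibbs state `π_M = diag(1 - 1/M, 1/M)`. -/
noncomputable def piM (M : ℝ) : Matrix (Fin 2) (Fin 2) ℂ :=
  Matrix.diagonal ![((1 - 1/M : ℝ) : ℂ), ((1/M : ℝ) : ℂ)]

/-- The excited battery state `|1⟩⟨1| = diag(0,1)`. -/
def ket1 : Matrix (Fin 2) (Fin 2) ℂ :=
  Matrix.diagonal ![0, 1]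

/-- A test (POVM effect): `0 ≤ E ≤ I`. -/
def IsTest {n : Type*} [Fintype n] [DecidableEq n] (E : Matrix n n ℂ) : Prop :=
  E.PosSemidef ∧ (1 - E).PosSemidef

/-- Choi matrix `Σ_{ij} E_{ij} ⊗ F(E_{ij})` of a linear map on matrices. -/
noncomputable def choiMatrix {n m : Type*} [Fintype n] [DecidableEq n] [Fintype m]
    (F : Matrix n n ℂ →ₗ[ℂ] Matrix m m ℂ) :
    Matrix (n × m) (n × m) ℂ :=
  fun p q => F (Matrix.single p.1 q.1 1) p.2 q.2

/-- Completely positive (positive semidefinite Choi matrix) and trace preserving. -/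
def IsCPTP {n m : Type*} [Fintype n] [DecidableEq n] [Fintype m]
    (F : Matrix n n ℂ →ₗ[ℂ] Matrix m m ℂ) : Prop :=
  (choiMatrix F).PosSemidef ∧ ∀ X, (F X).trace = X.trace

/-- `n`-fold Kronecker (tensor) power of a `2 × 2` matrix, indexed by bit strings. -/
def tensPow (A : Matrix (Fin 2) (Fin 2) ℂ) (n : ℕ) :
    Matrix (Fin n → Fin 2) (Fin n → Fin 2) ℂ :=
  fun x y => ∏ i, A (x i) (y i)

/-- `ε`-ball (in trace distance) of density matrices around a set `𝓟`. -/
noncomputable def metBall {n : Type*} [Fintype n] [DecidableEq n]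
    (ε : ℝ) (P : Set (Matrix n n ℂ)) : Set (Matrix n n ℂ) :=
  {ω | IsDensityMatrix ω ∧ ∃ ρ ∈ P, traceDist ω ρ ≤ ε}

/-! The battery is a classical two-level system, so a channel out of it is determined by the
images of `|0⟩⟨0|` and `|1⟩⟨1|`. If `F` is a channel, then `M π_M - |1⟩⟨1| = (M - 1) |0⟩⟨0| ≥ 0`
gives `M F(π_M) - F(|1⟩⟨1|) ≥ 0`, so `ω := F(|1⟩⟨1|)` witnesses the condition. Conversely, if
`M τ ≥ ω` then `σ := (M τ - ω) / (M - 1)` is a state with `τ = (1 - 1/M) σ + (1/M) ω`, and the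
measure-and-prepare channel `|0⟩⟨0| ↦ σ`, `|1⟩⟨1| ↦ ω` sends `π_M` to `τ` and `|1⟩⟨1|` to `ω`. -/

open scoped Kronecker

section Choi

variable {n m : Type*} [Fintype n]

noncomputable def measurePrepare (σ : n → Matrix m m ℂ) : Matrix n n ℂ →ₗ[ℂ] Matrix m m ℂ :=
  ∑ i, (entryLinearMap ℂ ℂ i i).smulRight (σ i)

@[simp]
lemma measurePrepare_apply (σ : n → Matrix m m ℂ) (X : Matrix n n ℂ) :
    measurePrepare σ X = ∑ i, X i i • σ i := by
  simp [measurePrepare]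

variable [DecidableEq n]

lemma measurePrepare_diagonal (σ : n → Matrix m m ℂ) (p : n → ℂ) :
    measurePrepare σ (diagonal p) = ∑ i, p i • σ i := by
  simp

variable [Fintype m]

lemma posSemidef_apply_single_of_posSemidef_choiMatrix {F : Matrix n n ℂ →ₗ[ℂ] Matrix m m ℂ}
    (hF : (choiMatrix F).PosSemidef) (i : n) : (F (single i i 1)).PosSemidef :=
  hF.submatrix fun p => (i, p)

lemma choiMatrix_measurePrepare (σ : n → Matrix m m ℂ) :
    choiMatrix (measurePrepare σ) = ∑ i, single i i 1 ⊗ₖ σ i := by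
  ext ⟨j, p⟩ ⟨k, q⟩
  simp only [choiMatrix, measurePrepare_apply, single_apply, Matrix.sum_apply, kroneckerMap_apply,
    Matrix.smul_apply]
  refine Finset.sum_congr rfl fun c _ => ?_
  by_cases hj : j = c <;> by_cases hk : k = c <;> simp [hj, hk, Ne.symm]

lemma isCPTP_measurePrepare {σ : n → Matrix m m ℂ} (hσ : ∀ i, IsDensityMatrix (σ i)) :
    IsCPTP (measurePrepare σ) := by
  refine ⟨?_, fun X => ?_⟩
  · rw [choiMatrix_measurePrepare]
    refine posSemidef_sum _ fun i _ => PosSemidef.kronecker ?_ (hσ i).1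
    rw [← diagonal_single]
    exact .diagonal (Pi.single_nonneg.2 zero_le_one)
  · simp only [measurePrepare_apply, trace_sum, trace_smul, (hσ _).2, smul_eq_mul, mul_one]
    rfl

end Choi

lemma ket1_eq_single : ket1 = single 1 1 1 := by
  rw [ket1, ← diagonal_single]
  congr 1
  ext i
  fin_cases i <;> rfl

lemma smul_piM_sub_ket1 {M : ℝ} (hM : M ≠ 0) : M • piM M - ket1 = (M - 1) • single 0 0 1 := by
  ext i j
  fin_cases i <;> fin_cases j <;> simp [piM, ket1, Complex.real_smul, mul_sub, hM]

section Battery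

variable {m : Type*}

lemma measurePrepare_piM (σ ω : Matrix m m ℂ) (M : ℝ) :
    measurePrepare ![σ, ω] (piM M) = (1 - 1 / M) • σ + (1 / M) • ω := by
  simp only [piM, measurePrepare_diagonal, Fin.sum_univ_two, Matrix.cons_val_zero,
    Matrix.cons_val_one, ← Complex.coe_algebraMap, algebraMap_smul]

lemma measurePrepare_ket1 (σ ω : Matrix m m ℂ) : measurePrepare ![σ, ω] ket1 = ω := by
  simp [ket1, Fin.sum_univ_two]

noncomputable def mixtureComplement (M : ℝ) (τ ω : Matrix m m ℂ) : Matrix m m ℂ :=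
  (M - 1)⁻¹ • (M • τ - ω)

lemma one_sub_one_div_smul_mixtureComplement_add {M : ℝ} (hM : 1 < M) (τ ω : Matrix m m ℂ) :
    (1 - 1 / M) • mixtureComplement M τ ω + (1 / M) • ω = τ := by
  have hM0 : M ≠ 0 := by positivity
  have hM1 : M - 1 ≠ 0 := sub_ne_zero.2 hM.ne'
  have : (1 - 1 / M) * (M - 1)⁻¹ = 1 / M := by field_simp
  rw [mixtureComplement, smul_smul, this, smul_sub, smul_smul, one_div_mul_cancel hM0, one_smul,
    sub_add_cancel]

variable [Fintype m]

lemma isDensityMatrix_mixtureComplement {M : ℝ} (hM : 1 < M) {τ ω : Matrix m m ℂ}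
    (hτ : τ.trace = 1) (hω : ω.trace = 1) (h : (M • τ - ω).PosSemidef) :
    IsDensityMatrix (mixtureComplement M τ ω) := by
  refine ⟨h.smul (inv_nonneg.2 (sub_nonneg.2 hM.le)), ?_⟩
  rw [mixtureComplement, trace_smul, trace_sub, trace_smul, hτ, hω, Complex.real_smul,
    Complex.real_smul]
  have : (M : ℂ) - 1 ≠ 0 := by exact_mod_cast sub_ne_zero.2 hM.ne'
  push_cast
  field_simp

variable {F : Matrix (Fin 2) (Fin 2) ℂ →ₗ[ℂ] Matrix m m ℂ}

lemma isDensityMatrix_map_ket1 (hF : IsCPTP F) : IsDensityMatrix (F ket1) := by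
  refine ⟨ket1_eq_single ▸ posSemidef_apply_single_of_posSemidef_choiMatrix hF.1 1, ?_⟩
  rw [hF.2]
  simp [ket1, trace, Fin.sum_univ_two]

lemma posSemidef_smul_map_piM_sub_map_ket1 (hF : IsCPTP F) {M : ℝ} (hM : 1 ≤ M) :
    (M • F (piM M) - F ket1).PosSemidef := by
  rw [← LinearMap.map_smul_of_tower, ← map_sub, smul_piM_sub_ket1 (by positivity),
    LinearMap.map_smul_of_tower]
  exact (posSemidef_apply_single_of_posSemidef_choiMatrix hF.1 0).smul (sub_nonneg.2 hM)

end Battery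

theorem stmt_7_general {d : ℕ} (ε M : ℝ) (hM : 1 < M)
    (𝓟 𝓔 : Set (Matrix (Fin d) (Fin d) ℂ))
    (h𝓔 : ∀ τ ∈ 𝓔, IsDensityMatrix τ) :
    (∃ F : Matrix (Fin 2) (Fin 2) ℂ →ₗ[ℂ] Matrix (Fin d) (Fin d) ℂ,
        IsCPTP F ∧ ∃ ρ ∈ 𝓟, ∃ τ ∈ 𝓔,
          F (piM M) = τ ∧ traceDist (F ket1) ρ ≤ ε) ↔
      (∃ τ ∈ 𝓔, ∃ ω ∈ metBall ε 𝓟, (M • τ - ω).PosSemidef) := by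
  constructor
  · rintro ⟨F, hF, ρ, hρ, τ, hτ, rfl, hdist⟩
    exact ⟨_, hτ, F ket1, ⟨isDensityMatrix_map_ket1 hF, ρ, hρ, hdist⟩,
      posSemidef_smul_map_piM_sub_map_ket1 hF hM.le⟩
  · rintro ⟨τ, hτ, ω, ⟨hω, ρ, hρ, hdist⟩, hpos⟩
    refine ⟨measurePrepare ![mixtureComplement M τ ω, ω], isCPTP_measurePrepare ?_,
      ρ, hρ, τ, hτ, ?_, ?_⟩
    · exact Fin.forall_fin_two.2
        ⟨isDensityMatrix_mixtureComplement hM (h𝓔 τ hτ).2 hω.2 hpos, hω⟩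
    · rw [measurePrepare_piM, one_sub_one_div_smul_mixtureComplement_add hM]
    · rwa [measurePrepare_ket1]

/-- one-shot work of formation from a clean battery under GPO is
characterized by the smoothed max-relative entropy condition `Mτ - ω ≥ 0`. -/
theorem stmt_7 {d : ℕ} (ε M : ℝ) (hε : ε ∈ Set.Ico (0:ℝ) 1) (hM : 1 < M)
    (𝓟 𝓔 : Set (Matrix (Fin d) (Fin d) ℂ))
    (h𝓟ne : 𝓟.Nonempty) (h𝓔ne : 𝓔.Nonempty)
    (h𝓟 : ∀ ρ ∈ 𝓟, IsDensityMatrix ρ) (h𝓔 : ∀ τ ∈ 𝓔, IsDensityMatrix τ) :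
    (∃ F : Matrix (Fin 2) (Fin 2) ℂ →ₗ[ℂ] Matrix (Fin d) (Fin d) ℂ,
        IsCPTP F ∧ ∃ ρ ∈ 𝓟, ∃ τ ∈ 𝓔,
          F (piM M) = τ ∧ traceDist (F ket1) ρ ≤ ε) ↔
      (∃ τ ∈ 𝓔, ∃ ω ∈ metBall ε 𝓟, (M • τ - ω).PosSemidef) :=
  stmt_7_general ε M hM 𝓟 𝓔 h𝓔
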